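/- Let f be a weighted Boolean CSP instance on n ≥ 1 variables with m ≥ 1 constraints and weighted length ℓ > 0, and suppose w̄ is a real number with 0 < w̄ ≤ w*. Let ε ∈ (0,1] and let δ be a real number with δ ≥ 1 + εw̄/ℓ (so δ > 1). Set r = ⌊n·εw̄/(δℓ)⌋. Then the number of assignments z ∈ {0,1}^n with W(f,z) ≥ (1−ε)·w* is at least 2^{H(rδ/((δ−1)n)) · ((δ−1)/δ)·n} / (n+1). -/

import Mathlib

/-- A weighted Boolean constraint satisfaction (MAX-CSP) instance on `n` variables:
`m` constraints, where constraint `i` is specified by a finite set `vars i` of variables,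
a predicate `sat i` on assignments whose truth value depends only on the restriction of the
assignment to `vars i`, and a positive real weight `wt i`. -/
structure CSP (n : ℕ) where
  m : ℕ
  vars : Fin m → Finset (Fin n)
  sat : Fin m → (Fin n → Bool) → Bool
  wt : Fin m → ℝ
  wt_pos : ∀ i, 0 < wt i
  sat_local : ∀ i z z', (∀ j ∈ vars i, z j = z' j) → sat i z = sat i z'

namespace CSP

variable {n : ℕ}

/-- The total weight `w = Σᵢ wᵢ`. -/
noncomputable def totalWeight (f : CSP n) : ℝ := ∑ i, f.wt i

/-- The weighted length `ℓ = Σᵢ |Sᵢ| wᵢ`. -/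
noncomputable def wlen (f : CSP n) : ℝ := ∑ i, ((f.vars i).card : ℝ) * f.wt i

/-- The contribution `ℓⱼ` of variable `j`: the sum of the weights of all constraints
containing it. -/
noncomputable def contrib (f : CSP n) (j : Fin n) : ℝ :=
  ∑ i, if j ∈ f.vars i then f.wt i else 0

/-- The weight `W(f,z)` of an assignment `z`: the sum of the weights of the constraints
satisfied by `z`. -/
noncomputable def W (f : CSP n) (z : Fin n → Bool) : ℝ :=
  ∑ i, if f.sat i z then f.wt i else 0

/-- The optimal weight `w* = max_z W(f,z)`. -/
noncomputable def wstar (f : CSP n) : ℝ :=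
  Finset.univ.sup' Finset.univ_nonempty f.W

end CSP

/-- The binary entropy function `H(p) = -p log₂ p - (1-p) log₂ (1-p)`,
with the convention `0 log₂ 0 = 0` (enforced by `Real.logb 2 0 = 0`). -/
noncomputable def binH (p : ℝ) : ℝ := -p * Real.logb 2 p - (1 - p) * Real.logb 2 (1 - p)

/-!
Fix an optimal assignment `z₀`. Flipping a set `S` of variables can only falsify constraints that
meet `S`, so it costs at most `∑_{j ∈ S} ℓ_j`. By Markov's inequality at least `(1 - 1/δ) n`
variables have `ℓ_j ≤ δℓ/n`, and flipping any `r` of them costs at most `r δℓ/n ≤ ε w̄ ≤ ε w*`.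
This gives `C(M, r)` near-optimal assignments with `M ≥ (1 - 1/δ) n`. Finally
`C(M, r) ≥ 2^{M H(r/M)} / (M + 1)`, because the term `i = r` is the largest in the binomial
expansion of `M^M = (r + (M - r))^M`, and `x ↦ x H(r/x)` is increasing on `[r, ∞)`.
-/

open Finset

lemma apply_le_of_unimodal {α : Type*} [Preorder α] {t : ℕ → α} {k : ℕ}
    (hup : ∀ i < k, t i ≤ t (i + 1)) (hdown : ∀ i ≥ k, t (i + 1) ≤ t i) (i : ℕ) : t i ≤ t k := by
  rcases le_total i k with hik | hki
  · have hmono : Monotone fun j => t (min j k) := monotone_nat_of_le_succ fun j => by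
      rcases lt_or_ge j k with hj | hj
      · simpa [min_eq_left hj.le, min_eq_left (Nat.succ_le_of_lt hj)] using hup j hj
      · simp [min_eq_right hj, min_eq_right (hj.trans j.le_succ)]
    simpa [min_eq_left hik] using hmono hik
  · exact antitoneOn_nat_Ici_of_succ_le hdown (le_refl k) hki hki

namespace Nat

lemma choose_mul_pow_mul_pow_le (a b i : ℕ) (hb : 0 < b) :
    (a + b).choose i * a ^ i * b ^ (a + b - i) ≤ (a + b).choose a * a ^ a * b ^ b := by
  set t : ℕ → ℕ := fun i => (a + b).choose i * a ^ i * b ^ (a + b - i)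
  have hratio : ∀ i < a + b, t (i + 1) * ((i + 1) * b) = t i * ((a + b - i) * a) := by
    intro i hi
    have hb_pow : b ^ (a + b - i) = b ^ (a + b - (i + 1)) * b := by
      rw [← pow_succ]; congr 1; omega
    calc t (i + 1) * ((i + 1) * b)
        = ((a + b).choose (i + 1) * (i + 1)) * a ^ (i + 1) * (b ^ (a + b - (i + 1)) * b) := by ring
      _ = t i * ((a + b - i) * a) := by rw [choose_succ_right_eq, ← hb_pow, pow_succ]; ring
  have hpos : ∀ i, 0 < (i + 1) * b := fun i => Nat.mul_pos i.succ_pos hb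
  have hup : ∀ i < a, t i ≤ t (i + 1) := by
    intro i hi
    refine Nat.le_of_mul_le_mul_right ?_ (hpos i)
    rw [hratio i (by omega)]
    exact Nat.mul_le_mul_left _ (by nlinarith [Nat.sub_add_cancel (show i ≤ a + b by omega)])
  have hdown : ∀ i ≥ a, t (i + 1) ≤ t i := by
    intro i hi
    rcases lt_or_ge i (a + b) with hlt | hge
    · refine Nat.le_of_mul_le_mul_right ?_ (hpos i)
      rw [hratio i hlt]
      exact Nat.mul_le_mul_left _ (by nlinarith [Nat.sub_add_cancel hlt.le])
    · simp [t, choose_eq_zero_of_lt (show a + b < i + 1 by omega)]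
  simpa [t] using apply_le_of_unimodal hup hdown i

lemma add_pow_add_le_succ_mul_choose_mul (a b : ℕ) :
    (a + b) ^ (a + b) ≤ (a + b + 1) * ((a + b).choose a * a ^ a * b ^ b) := by
  rcases b.eq_zero_or_pos with rfl | hb
  · simpa using Nat.le_mul_of_pos_left _ (succ_pos a)
  calc (a + b) ^ (a + b)
      = ∑ i ∈ range (a + b + 1), a ^ i * b ^ (a + b - i) * (a + b).choose i := add_pow a b _
    _ ≤ ∑ _i ∈ range (a + b + 1), (a + b).choose a * a ^ a * b ^ b :=
        sum_le_sum fun i _ => (Nat.mul_comm _ _).trans_le (by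
          simpa only [mul_assoc] using choose_mul_pow_mul_pow_le a b i hb)
    _ = (a + b + 1) * ((a + b).choose a * a ^ a * b ^ b) := by simp

end Nat

open Real

lemma binH_div_mul_mul_log_two {r x : ℝ} (hr : 0 ≤ r) (hrx : r ≤ x) :
    binH (r / x) * x * log 2 = x * log x - r * log r - (x - r) * log (x - r) := by
  rcases hr.eq_or_lt with rfl | hr
  · simp [binH]
  rcases hrx.eq_or_lt with rfl | hrx
  · simp [binH, hr.ne']
  have hx : 0 < x := hr.trans hrx
  have h1 : 1 - r / x = (x - r) / x := by field_simp
  simp only [binH, logb, h1]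
  rw [log_div hr.ne' hx.ne', log_div (sub_pos.2 hrx).ne' hx.ne']
  field_simp
  ring

lemma monotoneOn_mul_log_sub_mul_log_sub {r : ℝ} (hr : 0 ≤ r) :
    MonotoneOn (fun y => y * log y - (y - r) * log (y - r)) (Set.Ici r) := by
  refine monotoneOn_of_hasDerivWithinAt_nonneg (f' := fun y => log y - log (y - r)) (convex_Ici r)
    (continuous_mul_log.sub (continuous_mul_log.comp (continuous_sub_right r))).continuousOn
    (fun y hy => ?_) (fun y hy => ?_) <;> rw [interior_Ici, Set.mem_Ioi] at hy
  · have hyr : y - r ≠ 0 := (sub_pos.2 hy).ne'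
    exact (((hasDerivAt_mul_log (hr.trans_lt hy).ne').sub
      (hasDerivAt_mul_log hyr).comp_sub_const).congr_deriv
      (by ring)).hasDerivWithinAt
  · exact sub_nonneg.2 (log_le_log (sub_pos.2 hy) (by linarith))

lemma two_rpow_binH_div_mul_le (M r : ℕ) {x : ℝ} (hrx : (r : ℝ) ≤ x) (hxM : x ≤ M) :
    (2 : ℝ) ^ (binH (r / x) * x) ≤ (M + 1) * M.choose r := by
  obtain ⟨b, rfl⟩ := Nat.exists_eq_add_of_le (show r ≤ M by exact_mod_cast hrx.trans hxM)
  have hchoose : (0 : ℝ) < (r + b).choose r := by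
    exact_mod_cast Nat.choose_pos (Nat.le_add_right r b)
  have hr : (0 : ℝ) < (r : ℝ) ^ r := by exact_mod_cast Nat.pow_self_pos
  have hb : (0 : ℝ) < (b : ℝ) ^ b := by exact_mod_cast Nat.pow_self_pos
  have hcount : ((r + b : ℕ) : ℝ) ^ (r + b) ≤
      ((r + b : ℕ) + 1) * ((r + b).choose r * (r : ℝ) ^ r * (b : ℝ) ^ b) := by
    exact_mod_cast Nat.add_pow_add_le_succ_mul_choose_mul r b
  have hlog := log_le_log (by exact_mod_cast Nat.pow_self_pos) hcount
  rw [log_mul (by positivity) (by positivity), log_mul (by positivity) (by positivity),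
    log_mul hchoose.ne' hr.ne', log_pow, log_pow, log_pow] at hlog
  rw [rpow_def_of_pos two_pos, ← le_log_iff_exp_le (by positivity),
    log_mul (by positivity) hchoose.ne', mul_comm, binH_div_mul_mul_log_two (Nat.cast_nonneg r) hrx]
  have hmono := monotoneOn_mul_log_sub_mul_log_sub (Nat.cast_nonneg r) hrx (hrx.trans hxM) hxM
  push_cast at hmono hlog ⊢
  simp only [add_sub_cancel_left] at hmono
  linarith

def flipOn {α : Type*} [DecidableEq α] (S : Finset α) (z : α → Bool) (j : α) : Bool :=
  if j ∈ S then !z j else z j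

lemma flipOn_injective {α : Type*} [DecidableEq α] (z : α → Bool) :
    Function.Injective fun S : Finset α => flipOn S z := by
  intro S T hST
  ext j
  have := congrFun hST j
  by_cases hS : j ∈ S <;> by_cases hT : j ∈ T <;> simp_all [flipOn]

namespace CSP

variable {n : ℕ} (f : CSP n)

lemma exists_W_eq_wstar : ∃ z, f.W z = f.wstar := by
  obtain ⟨z, -, hz⟩ := exists_mem_eq_sup' univ_nonempty f.W
  exact ⟨z, hz.symm⟩

lemma contrib_nonneg (j : Fin n) : 0 ≤ f.contrib j :=
  sum_nonneg fun i _ => by split_ifs <;> simp [(f.wt_pos i).le]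

lemma sum_contrib (S : Finset (Fin n)) :
    ∑ j ∈ S, f.contrib j = ∑ i, (#(S ∩ f.vars i) : ℝ) * f.wt i := by
  simp only [contrib]
  rw [sum_comm]
  refine sum_congr rfl fun i _ => ?_
  rw [sum_ite_mem, sum_const, nsmul_eq_mul]

lemma sum_univ_contrib : ∑ j, f.contrib j = f.wlen := by
  simp [sum_contrib, wlen]

lemma W_sub_sum_contrib_le_W_flipOn (z : Fin n → Bool) (S : Finset (Fin n)) :
    f.W z - ∑ j ∈ S, f.contrib j ≤ f.W (flipOn S z) := by
  rw [sum_contrib, W, W, sub_le_iff_le_add, ← sum_add_distrib]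
  refine sum_le_sum fun i _ => ?_
  have hw := (f.wt_pos i).le
  rcases (S ∩ f.vars i).eq_empty_or_nonempty with hempty | hne
  · have hsat : f.sat i (flipOn S z) = f.sat i z := f.sat_local i _ _ fun j hj => by
      have : j ∉ S := fun hjS => (eq_empty_iff_forall_notMem.1 hempty) j (mem_inter.2 ⟨hjS, hj⟩)
      simp [flipOn, this]
    simp [hempty, hsat]
  · have hcard : (1 : ℝ) ≤ #(S ∩ f.vars i) := by exact_mod_cast hne.card_pos
    split_ifs <;> nlinarith

lemma sub_div_le_card_contrib_le (hn : 0 < n) (hl : 0 < f.wlen) {δ : ℝ} (hδ : 0 < δ) :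
    (n : ℝ) - n / δ ≤ #{j | f.contrib j ≤ δ * f.wlen / n} := by
  set t := δ * f.wlen / n with ht_def
  have ht : 0 < t := by positivity
  have hlarge : #{j | ¬ f.contrib j ≤ t} * t ≤ f.wlen := by
    calc #{j | ¬ f.contrib j ≤ t} * t ≤ ∑ j ∈ {j | ¬ f.contrib j ≤ t}, f.contrib j := by
          simpa using card_nsmul_le_sum _ f.contrib t fun j hj => (not_le.1 (mem_filter.1 hj).2).le
      _ ≤ ∑ j, f.contrib j := sum_le_sum_of_subset_of_nonneg (subset_univ _)
          fun j _ _ => f.contrib_nonneg j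
      _ = f.wlen := f.sum_univ_contrib
  have hsplit : (#{j | f.contrib j ≤ t} : ℝ) + #{j | ¬ f.contrib j ≤ t} = n := by
    exact_mod_cast (card_filter_add_card_filter_not _).trans (card_fin n)
  have htn : t * (n / f.wlen) = δ := by rw [ht_def]; field_simp
  have : (#{j | ¬ f.contrib j ≤ t} : ℝ) ≤ n / δ := by
    rw [le_div_iff₀ hδ]
    calc (#{j | ¬ f.contrib j ≤ t} : ℝ) * δ = #{j | ¬ f.contrib j ≤ t} * t * (n / f.wlen) := by
          rw [mul_assoc, htn]
      _ ≤ f.wlen * (n / f.wlen) := by gcongr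
      _ = n := by field_simp
  linarith

lemma choose_card_le_card_of_contrib_le {ε c : ℝ} {r : ℕ} (B : Finset (Fin n))
    (hB : ∀ j ∈ B, f.contrib j ≤ c) (hrc : r * c ≤ ε * f.wstar) :
    (#B).choose r ≤ Nat.card {z // (1 - ε) * f.wstar ≤ f.W z} := by
  obtain ⟨z₀, hz₀⟩ := f.exists_W_eq_wstar
  have hnear : ∀ S ∈ B.powersetCard r, (1 - ε) * f.wstar ≤ f.W (flipOn S z₀) := by
    intro S hS
    obtain ⟨hSB, rfl⟩ := mem_powersetCard.1 hS
    have hsum : ∑ j ∈ S, f.contrib j ≤ #S * c := by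
      simpa using sum_le_card_nsmul S f.contrib c fun j hj => hB j (hSB hj)
    linarith [f.W_sub_sum_contrib_le_W_flipOn z₀ S]
  rw [← card_powersetCard, ← Nat.card_eq_finsetCard]
  exact Nat.card_le_card_of_injective (fun S => ⟨flipOn S z₀, hnear S S.2⟩)
    fun S T h => Subtype.ext (flipOn_injective z₀ (congrArg Subtype.val h))

end CSP

theorem CSP.count_relative_near_optimal_lower_bound_general (n : ℕ) (hn : 1 ≤ n) (f : CSP n)
    (hl : 0 < f.wlen)
    (wbar : ℝ) (hwbar0 : 0 < wbar) (hwbar : wbar ≤ f.wstar)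
    (ε : ℝ) (hε0 : 0 < ε)
    (δ : ℝ) (hδ : 1 + ε * wbar / f.wlen ≤ δ)
    (r : ℕ) (hr : r = ⌊(n : ℝ) * ε * wbar / (δ * f.wlen)⌋₊) :
    (2 : ℝ) ^ (binH ((r : ℝ) * δ / ((δ - 1) * (n : ℝ))) * ((δ - 1) / δ) * (n : ℝ)) / ((n : ℝ) + 1)
      ≤ (Nat.card {z : Fin n → Bool // (1 - ε) * f.wstar ≤ f.W z} : ℝ) := by
  have hδ₀ : 0 < δ := by linarith [show 0 ≤ ε * wbar / f.wlen by positivity]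
  set B : Finset (Fin n) := {j | f.contrib j ≤ δ * f.wlen / n}
  set x : ℝ := (δ - 1) / δ * n with hx
  have hr_le : (r : ℝ) ≤ n * ε * wbar / (δ * f.wlen) := hr ▸ Nat.floor_le (by positivity)
  have hrx : (r : ℝ) ≤ x := calc
    (r : ℝ) ≤ n * ε * wbar / (δ * f.wlen) := hr_le
    _ = n / δ * (ε * wbar / f.wlen) := by field_simp
    _ ≤ n / δ * (δ - 1) := by gcongr; linarith
    _ = x := by rw [hx]; ring
  have hxB : x ≤ #B := by
    convert f.sub_div_le_card_contrib_le hn hl hδ₀ using 1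
    rw [hx]
    field_simp
  have hBn : (#B : ℝ) ≤ n := by exact_mod_cast (card_le_univ B).trans_eq (card_fin n)
  have hrc : r * (δ * f.wlen / n) ≤ ε * f.wstar := calc
    r * (δ * f.wlen / n) ≤ n * ε * wbar / (δ * f.wlen) * (δ * f.wlen / n) := by gcongr
    _ = ε * wbar := by field_simp
    _ ≤ ε * f.wstar := by gcongr
  have hcount := f.choose_card_le_card_of_contrib_le B (fun j hj => (mem_filter.1 hj).2) hrc
  calc (2 : ℝ) ^ (binH (r * δ / ((δ - 1) * n)) * ((δ - 1) / δ) * n) / (n + 1)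
      = 2 ^ (binH (r / x) * x) / (n + 1) := by
        rw [mul_assoc, hx, div_mul_eq_mul_div, div_div_eq_mul_div]
    _ ≤ (#B + 1) * (#B).choose r / (n + 1) := by
        gcongr; exact two_rpow_binH_div_mul_le _ _ hrx hxB
    _ ≤ (#B).choose r := by
        rw [div_le_iff₀ (by positivity), mul_comm]; gcongr
    _ ≤ Nat.card {z : Fin n → Bool // (1 - ε) * f.wstar ≤ f.W z} := by exact_mod_cast hcount

theorem CSP.count_relative_near_optimal_lower_bound (n : ℕ) (hn : 1 ≤ n) (f : CSP n)
    (hm : 1 ≤ f.m) (hl : 0 < f.wlen)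
    (wbar : ℝ) (hwbar0 : 0 < wbar) (hwbar : wbar ≤ f.wstar)
    (ε : ℝ) (hε0 : 0 < ε) (hε1 : ε ≤ 1)
    (δ : ℝ) (hδ : 1 + ε * wbar / f.wlen ≤ δ)
    (r : ℕ) (hr : r = ⌊(n : ℝ) * ε * wbar / (δ * f.wlen)⌋₊) :
    (2 : ℝ) ^ (binH ((r : ℝ) * δ / ((δ - 1) * (n : ℝ))) * ((δ - 1) / δ) * (n : ℝ)) / ((n : ℝ) + 1)
      ≤ (Nat.card {z : Fin n → Bool // (1 - ε) * f.wstar ≤ f.W z} : ℝ) :=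
  CSP.count_relative_near_optimal_lower_bound_general n hn f hl wbar hwbar0 hwbar ε hε0 δ hδ r hr
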